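/- For every S ∈ [0,1], the inequality inf_{γ∈ℝ} { H_A(γ) − (1/2)γS } − (S² − 1) = S − S² ≥ 0 holds, with strict inequality exactly when S ∈ (0,1). -/

import Mathlib

/-!
Writing `t = u² ∈ [0,1]`, the agent's objective `(γ/2) t + t² - 1` is convex in `t`, so its maximum
over `[0,1]` is attained at an endpoint: `H_A(γ) = max (γ/2) (-1)`. For `S ∈ [0,1]` the convex
combination `S • (γ/2) + (1 - S) • (-1)` bounds this maximum from below, so
`H_A(γ) - γS/2 ≥ S - 1`, with equality at the kink `γ = -2`.
-/

open Set

theorem isGreatest_agentHamiltonian (γ : ℝ) :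
    IsGreatest {y : ℝ | ∃ u ∈ Icc (-1:ℝ) 1, y = (1/2) * γ * u ^ 2 - (1 - u ^ 4)}
      (max ((1/2) * γ) (-1)) := by
  refine ⟨?_, ?_⟩
  · rcases le_total ((1/2) * γ) (-1) with h | h
    · exact ⟨0, by norm_num, by rw [max_eq_right h]; norm_num⟩
    · exact ⟨1, by norm_num, by rw [max_eq_left h]; norm_num⟩
  · rintro y ⟨u, ⟨hu₁, hu₂⟩, rfl⟩
    have ht₀ : 0 ≤ u ^ 2 := sq_nonneg u
    have ht₁ : u ^ 2 ≤ 1 := sq_le_one_iff_abs_le_one u |>.mpr (abs_le.mpr ⟨hu₁, hu₂⟩)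
    calc (1/2) * γ * u ^ 2 - (1 - u ^ 4)
        ≤ u ^ 2 • ((1/2) * γ) + (1 - u ^ 2) • (-1 : ℝ) := by
          simp only [smul_eq_mul]; nlinarith [mul_le_mul_of_nonneg_left ht₁ ht₀]
      _ ≤ max ((1/2) * γ) (-1) := Convex.combo_le_max _ _ ht₀ (sub_nonneg.mpr ht₁) (by ring)

theorem isLeast_max_sub_mul {S : ℝ} (hS : S ∈ Icc (0:ℝ) 1) :
    IsLeast {y : ℝ | ∃ γ : ℝ, y = max ((1/2) * γ) (-1) - (1/2) * γ * S} (S - 1) := by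
  refine ⟨⟨-2, by norm_num; ring⟩, ?_⟩
  rintro y ⟨γ, rfl⟩
  have := Convex.combo_le_max ((1/2) * γ) (-1 : ℝ) hS.1 (sub_nonneg.mpr hS.2) (add_sub_cancel S 1)
  simp only [smul_eq_mul] at this
  linarith

theorem sub_sq_pos_iff_mem_Ioo (S : ℝ) : 0 < S - S ^ 2 ↔ S ∈ Ioo (0:ℝ) 1 := by
  rw [show S - S ^ 2 = S * (1 - S) by ring, mul_pos_iff]
  constructor
  · rintro (⟨h₀, h₁⟩ | ⟨h₀, h₁⟩)
    · exact ⟨h₀, by linarith⟩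
    · linarith
  · rintro ⟨h₀, h₁⟩
    exact Or.inl ⟨h₀, by linarith⟩

/-- With `H_A(γ) = sup_{u∈[−1,1]} ((1/2) γ u² − (1 − u⁴))`, for `S ∈ [0,1]`:
`inf_γ { H_A(γ) − (1/2) γ S } − (S² − 1) = S − S² ≥ 0`, strictly positive exactly
when `S ∈ (0,1)`. -/
theorem stmt12 (S : ℝ) (hS : S ∈ Set.Icc (0:ℝ) 1) :
    let H : ℝ → ℝ := fun γ =>
      sSup {y : ℝ | ∃ u ∈ Set.Icc (-1:ℝ) 1, y = (1/2) * γ * u ^ 2 - (1 - u ^ 4)}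
    sInf {y : ℝ | ∃ γ : ℝ, y = H γ - (1/2) * γ * S} - (S ^ 2 - 1) = S - S ^ 2 ∧
    0 ≤ S - S ^ 2 ∧
    (0 < S - S ^ 2 ↔ S ∈ Set.Ioo (0:ℝ) 1) := by
  intro H
  have hH : ∀ γ, H γ = max ((1/2) * γ) (-1) := fun γ => (isGreatest_agentHamiltonian γ).csSup_eq
  simp only [hH, (isLeast_max_sub_mul hS).csInf_eq]
  exact ⟨by ring, by nlinarith [hS.1, hS.2], sub_sq_pos_iff_mem_Ioo S⟩
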